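/- arXiv:1806.10357 — 2 statements merged into one kernel-verified Lean document; each statement's English description precedes it below -/
import Mathlib

section
/- For every integer n ≥ 2, under the uniform probability measure on {−1,1}^n, the sum of the individual variances of the squared spectral amplitudes over the first half of the spectrum satisfies ∑_{j=0}^{⌊n/2⌋−1} V[|f_j|²] = ⌊n/2⌋·(n² − 2n) + n². -/
open Finset Real

/-- Expectation with respect to the uniform probability measure on `{-1,1}^n`:
`E[g] = 2^{-n} ∑_{x ∈ {-1,1}^n} g(x)`. -/
noncomputable def expect (n : ℕ) (g : (Fin n → ℝ) → ℝ) : ℝ :=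
  (∑ x : Fin n → ({-1, 1} : Finset ℝ), g (fun k => (x k : ℝ))) / 2 ^ n

/-- Variance with respect to the uniform probability measure on `{-1,1}^n`:
`V[g] = E[g²] − E[g]²`. -/
noncomputable def var (n : ℕ) (g : (Fin n → ℝ) → ℝ) : ℝ :=
  expect n (fun x => g x ^ 2) - (expect n g) ^ 2

/-- The squared amplitude of the `j`-th discrete Fourier coefficient:
`|f_j|² = (∑_k x_k cos(2πkj/n))² + (∑_k x_k sin(2πkj/n))²`. -/
noncomputable def absSqDFT (n : ℕ) (j : ℕ) (x : Fin n → ℝ) : ℝ :=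
  (∑ k : Fin n, x k * Real.cos (2 * Real.pi * k * j / n)) ^ 2 +
    (∑ k : Fin n, x k * Real.sin (2 * Real.pi * k * j / n)) ^ 2

/-! On `{-1,1}ⁿ`, `|f_j|² = ∑_{k,l} cos(θ_k - θ_l) x_k x_l` with `θ_k = 2πkj/n` is a quadratic
form in Rademacher variables. Since `x_k² = 1` and the Walsh characters `∏_{k ∈ S} x_k` are
orthonormal, a form `∑ b_{kl} x_k x_l` with symmetric `b` has variance `2 ∑_{k ≠ l} b_{kl}²`.
By `cos² = (1 + cos 2·)/2`, `∑_{k,l} cos²(θ_k - θ_l) = n²/2 + |∑_k e^{2iθ_k}|²/2`, which is `n²`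
for `j = 0` and `n²/2` for `0 < j < n/2`, where the root-of-unity sum vanishes. Hence
`V[|f_0|²] = 2(n² - n)` and `V[|f_j|²] = n² - 2n` for the other `j`. -/

theorem Finset.pair_eq_pair_iff {ι : Type*} [DecidableEq ι] {a b c d : ι} :
    ({a, b} : Finset ι) = {c, d} ↔ a = c ∧ b = d ∨ a = d ∧ b = c := by
  rw [← coe_inj, coe_pair, coe_pair, Set.pair_eq_pair_iff]

lemma sum_sum_eq_sum_add_sum_offDiag {ι M : Type*} [DecidableEq ι] [AddCommMonoid M]
    (s : Finset ι) (f : ι → ι → M) :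
    ∑ k ∈ s, ∑ l ∈ s, f k l = ∑ k ∈ s, f k k + ∑ p ∈ s.offDiag, f p.1 p.2 := by
  rw [← sum_product', ← diag_union_offDiag, sum_union (disjoint_diag_offDiag _), sum_diag]

lemma sum_offDiag_ite_pair_eq {ι M : Type*} [DecidableEq ι] [AddCommMonoid M] {s : Finset ι}
    (f : ι × ι → M) {p : ι × ι} (hp : p ∈ s.offDiag) :
    ∑ q ∈ s.offDiag, (if ({p.1, p.2} : Finset ι) = {q.1, q.2} then f q else 0) =
      f p + f p.swap := by
  obtain ⟨hp₁, hp₂, hp⟩ := mem_offDiag.1 hp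
  have hfilter : {q ∈ s.offDiag | ({p.1, p.2} : Finset ι) = {q.1, q.2}} = {p, p.swap} := by
    ext ⟨q₁, q₂⟩
    simp only [mem_filter, mem_offDiag, pair_eq_pair_iff, mem_insert, mem_singleton, Prod.ext_iff,
      Prod.fst_swap, Prod.snd_swap]
    grind
  rw [← sum_filter, hfilter, sum_pair fun h => hp (congrArg Prod.fst h)]

lemma prod_mul_prod_eq_prod_symmDiff {ι M : Type*} [DecidableEq ι] [CommMonoid M] {f : ι → M}
    (S T : Finset ι) (hf : ∀ i ∈ S ∩ T, f i ^ 2 = 1) :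
    (∏ i ∈ S, f i) * ∏ i ∈ T, f i = ∏ i ∈ symmDiff S T, f i := by
  rw [← prod_union_inter, ← sup_eq_union, ← symmDiff_sup_inf, sup_eq_union,
    prod_union (disjoint_symmDiff_inf S T), inf_eq_inter, mul_assoc, ← sq, ← prod_pow,
    prod_congr rfl hf, prod_const_one, mul_one]

namespace Rademacher

variable {n : ℕ}

lemma sum_signs_prod (f : Fin n → ℝ → ℝ) :
    ∑ x : Fin n → ({-1, 1} : Finset ℝ), ∏ k, f k (x k) = ∏ k, (f k (-1) + f k 1) := by
  rw [← Fintype.prod_sum fun k (a : ({-1, 1} : Finset ℝ)) => f k a]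
  refine prod_congr rfl fun k _ => ?_
  rw [sum_coe_sort _ (f k), sum_pair (by norm_num)]

lemma expect_congr {g₁ g₂ : (Fin n → ℝ) → ℝ}
    (h : ∀ x : Fin n → ℝ, (∀ k, x k ^ 2 = 1) → g₁ x = g₂ x) : expect n g₁ = expect n g₂ := by
  unfold _root_.expect
  congr 1
  refine sum_congr rfl fun x _ => h _ fun k => ?_
  have hk := (x k).2
  simp only [mem_insert, mem_singleton] at hk
  rcases hk with hk | hk <;> simp [hk]

lemma var_congr {g₁ g₂ : (Fin n → ℝ) → ℝ}
    (h : ∀ x : Fin n → ℝ, (∀ k, x k ^ 2 = 1) → g₁ x = g₂ x) : var n g₁ = var n g₂ := by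
  unfold _root_.var
  rw [expect_congr h, expect_congr (g₂ := fun x => g₂ x ^ 2) fun x hx => by rw [h x hx]]

lemma expect_add (g₁ g₂ : (Fin n → ℝ) → ℝ) :
    expect n (fun x => g₁ x + g₂ x) = expect n g₁ + expect n g₂ := by
  simp only [_root_.expect, sum_add_distrib, add_div]

lemma expect_const_mul (c : ℝ) (g : (Fin n → ℝ) → ℝ) :
    expect n (fun x => c * g x) = c * expect n g := by
  simp only [_root_.expect, ← mul_sum, mul_div_assoc]

lemma expect_sum {ι : Type*} (s : Finset ι) (g : ι → (Fin n → ℝ) → ℝ) :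
    expect n (fun x => ∑ i ∈ s, g i x) = ∑ i ∈ s, expect n (g i) := by
  simp only [_root_.expect, ← sum_div]
  rw [sum_comm]

lemma expect_prod (S : Finset (Fin n)) :
    expect n (fun x => ∏ k ∈ S, x k) = if S = ∅ then 1 else 0 := by
  have hS : ∀ x : Fin n → ℝ, ∏ k ∈ S, x k = ∏ k, if k ∈ S then x k else 1 := fun x => by
    rw [prod_ite_mem, univ_inter]
  unfold _root_.expect
  simp only [hS]
  rw [sum_signs_prod fun k a => if k ∈ S then a else 1]
  split_ifs with hS
  · simp [hS, one_add_one_eq_two]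
  · obtain ⟨k, hk⟩ := nonempty_iff_ne_empty.2 hS
    rw [prod_eq_zero (mem_univ k) (by simp [hk]), zero_div]

lemma expect_const (c : ℝ) : expect n (fun _ => c) = c := by
  have h1 : expect n (fun _ => (1 : ℝ)) = 1 := by simpa using expect_prod (n := n) ∅
  simpa [h1] using expect_const_mul (n := n) c fun _ => 1

lemma var_const_add (c : ℝ) (g : (Fin n → ℝ) → ℝ) :
    var n (fun x => c + g x) = var n g := by
  simp only [_root_.var, add_sq, expect_add, expect_const, expect_const_mul]
  ring

lemma expect_prod_mul_prod (S T : Finset (Fin n)) :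
    expect n (fun x => (∏ k ∈ S, x k) * ∏ k ∈ T, x k) = if S = T then 1 else 0 := by
  rw [expect_congr fun x hx => prod_mul_prod_eq_prod_symmDiff S T fun k _ => hx k, expect_prod]
  simp only [symmDiff_eq_empty]

lemma var_quadratic_form (b : Fin n → Fin n → ℝ) (hb : ∀ k l, b k l = b l k) :
    var n (fun x => ∑ k, ∑ l, b k l * (x k * x l)) = 2 * ∑ p ∈ univ.offDiag, b p.1 p.2 ^ 2 := by
  set W : (Fin n → ℝ) → ℝ := fun x => ∑ p ∈ univ.offDiag, b p.1 p.2 * ∏ i ∈ {p.1, p.2}, x i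
  have hdiag : ∀ x : Fin n → ℝ, (∀ k, x k ^ 2 = 1) →
      ∑ k, ∑ l, b k l * (x k * x l) = ∑ k, b k k + W x := by
    intro x hx
    rw [sum_sum_eq_sum_add_sum_offDiag]
    congr 1
    · simp [← sq, hx]
    · exact sum_congr rfl fun p hp => by rw [prod_pair (mem_offDiag.1 hp).2.2]
  have hmean : expect n W = 0 := by
    refine (expect_sum _ _).trans (sum_eq_zero fun p _ => ?_)
    rw [expect_const_mul, expect_prod, if_neg (insert_ne_empty _ _), mul_zero]
  have hsq : expect n (fun x => W x ^ 2) = 2 * ∑ p ∈ univ.offDiag, b p.1 p.2 ^ 2 := by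
    simp only [W, sq, sum_mul_sum, mul_mul_mul_comm (b _ _)]
    simp only [expect_sum, expect_const_mul, expect_prod_mul_prod, mul_ite, mul_one, mul_zero]
    rw [mul_sum]
    refine sum_congr rfl fun p hp => ?_
    rw [sum_offDiag_ite_pair_eq (fun q => b p.1 p.2 * b q.1 q.2) hp, Prod.fst_swap, Prod.snd_swap,
      ← hb]
    ring
  rw [var_congr hdiag, var_const_add]
  unfold _root_.var
  rw [hmean, hsq]
  ring

end Rademacher

lemma sq_sum_mul_cos_add_sq_sum_mul_sin {ι : Type*} (s : Finset ι) (a φ : ι → ℝ) :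
    (∑ k ∈ s, a k * cos (φ k)) ^ 2 + (∑ k ∈ s, a k * sin (φ k)) ^ 2 =
      ∑ k ∈ s, ∑ l ∈ s, cos (φ k - φ l) * (a k * a l) := by
  simp only [sq, sum_mul_sum, ← sum_add_distrib, cos_sub]
  exact sum_congr rfl fun k _ => sum_congr rfl fun l _ => by ring

lemma sum_sum_cos_sub_sq {ι : Type*} (s : Finset ι) (φ : ι → ℝ) :
    ∑ k ∈ s, ∑ l ∈ s, cos (φ k - φ l) ^ 2 =
      ((#s : ℝ) ^ 2 + (∑ k ∈ s, cos (2 * φ k)) ^ 2 + (∑ k ∈ s, sin (2 * φ k)) ^ 2) / 2 := by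
  have h := sq_sum_mul_cos_add_sq_sum_mul_sin s 1 (2 * φ ·)
  simp only [Pi.one_apply, one_mul, mul_one, ← mul_sub] at h
  rw [add_assoc, h]
  simp only [cos_sq, sum_add_distrib, sum_const, ← sum_div, nsmul_eq_mul]
  ring

lemma sum_cos_eq_zero_and_sum_sin_eq_zero {n m : ℕ} (h : ¬n ∣ m) :
    ∑ k : Fin n, cos (2 * π * k * m / n) = 0 ∧ ∑ k : Fin n, sin (2 * π * k * m / n) = 0 := by
  rcases eq_or_ne n 0 with rfl | hn
  · simp
  have hζ := Complex.isPrimitiveRoot_exp n hn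
  set z := Complex.exp (2 * π * Complex.I / n) ^ m
  have hz : z ≠ 1 := by rwa [Ne, hζ.pow_eq_one_iff_dvd]
  have hzn : z ^ n = 1 := by rw [pow_right_comm, hζ.pow_eq_one, one_pow]
  have hpow : ∀ k : ℕ, Complex.exp (↑(2 * π * k * m / n) * Complex.I) = z ^ k := fun k => by
    rw [← pow_mul, ← Complex.exp_nat_mul]
    push_cast
    ring_nf
  have hsum : ∑ k : Fin n, Complex.exp (↑(2 * π * k * m / n) * Complex.I) = 0 := by
    rw [Fin.sum_univ_eq_sum_range (fun k => Complex.exp (↑(2 * π * k * m / n) * Complex.I))]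
    simp only [hpow, geom_sum_eq hz, hzn, sub_self, zero_div]
  constructor
  · simpa only [Complex.re_sum, Complex.exp_ofReal_mul_I_re, Complex.zero_re] using
      congrArg Complex.re hsum
  · simpa only [Complex.im_sum, Complex.exp_ofReal_mul_I_im, Complex.zero_im] using
      congrArg Complex.im hsum

lemma absSqDFT_eq_sum_sum (n j : ℕ) (x : Fin n → ℝ) :
    absSqDFT n j x =
      ∑ k : Fin n, ∑ l : Fin n, cos (2 * π * k * j / n - 2 * π * l * j / n) * (x k * x l) :=
  sq_sum_mul_cos_add_sq_sum_mul_sin _ _ _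

lemma var_absSqDFT (n j : ℕ) :
    var n (absSqDFT n j) =
      2 * ∑ p ∈ (univ : Finset (Fin n)).offDiag,
        cos (2 * π * p.1 * j / n - 2 * π * p.2 * j / n) ^ 2 := by
  rw [show absSqDFT n j = _ from funext (absSqDFT_eq_sum_sum n j)]
  exact Rademacher.var_quadratic_form _ fun k l => by rw [← cos_neg, neg_sub]

lemma var_absSqDFT_zero (n : ℕ) : var n (absSqDFT n 0) = 2 * ((n : ℝ) ^ 2 - n) := by
  simp only [var_absSqDFT, CharP.cast_eq_zero, mul_zero, zero_div, sub_self, cos_zero, one_pow,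
    sum_const, nsmul_one, offDiag_card, card_univ, Fintype.card_fin]
  rw [Nat.cast_sub (Nat.le_mul_self n)]
  push_cast
  ring

lemma var_absSqDFT_of_not_dvd {n j : ℕ} (hj : ¬n ∣ 2 * j) :
    var n (absSqDFT n j) = (n : ℝ) ^ 2 - 2 * n := by
  obtain ⟨hcos, hsin⟩ := sum_cos_eq_zero_and_sum_sin_eq_zero hj
  have hangle : ∀ k : Fin n, 2 * (2 * π * k * j / n) = 2 * π * k * ↑(2 * j) / n := fun k => by
    push_cast
    ring
  have hsplit := sum_sum_eq_sum_add_sum_offDiag univ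
    fun k l : Fin n => cos (2 * π * k * j / n - 2 * π * l * j / n) ^ 2
  rw [var_absSqDFT, eq_sub_of_add_eq' hsplit.symm,
    sum_sum_cos_sub_sq univ fun k : Fin n => 2 * π * k * j / n]
  simp only [hangle, hcos, hsin, sub_self, cos_zero, card_univ, Fintype.card_fin,
    zero_pow two_ne_zero, add_zero, one_pow, sum_const, nsmul_eq_mul, mul_one]
  ring

/-- The sum of the variances of the squared spectral amplitudes over the first half
of the spectrum: `∑_{j=0}^{⌊n/2⌋-1} V[|f_j|²] = ⌊n/2⌋·(n² − 2n) + n²`. -/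
theorem sum_variances_half_spectrum (n : ℕ) (hn : 2 ≤ n) :
    ∑ j ∈ Finset.range (n / 2), var n (absSqDFT n j) =
      ((n / 2 : ℕ) : ℝ) * ((n : ℝ) ^ 2 - 2 * n) + (n : ℝ) ^ 2 := by
  have hhalf : 0 < n / 2 := by omega
  have hpos : ∀ j ∈ Ico 1 (n / 2), var n (absSqDFT n j) = (n : ℝ) ^ 2 - 2 * n := fun j hj =>
    var_absSqDFT_of_not_dvd (Nat.not_dvd_of_pos_of_lt (by grind) (by grind))
  rw [range_eq_Ico, sum_eq_sum_Ico_succ_bot hhalf, var_absSqDFT_zero, sum_congr rfl hpos,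
    sum_const, Nat.card_Ico, nsmul_eq_mul, Nat.cast_sub hhalf]
  push_cast
  ring
end

section
/- Let m ≥ 2 be an integer and let P be the uniform probability measure on the simplex S = {y ∈ ℝ^m : y_j ≥ 0 for all j, and ∑_{j=0}^{m−1} y_j = 2m²}. For a threshold T with 0 ≤ T² ≤ m², let F_i and F_j (i ≠ j) be the indicator functions of {y_i ≤ T²} and {y_j ≤ T²} respectively. Then the covariance of F_i and F_j under P equals (1 − T²/m²)^{m−1} − (1 − T²/(2m²))^{2m−2}. -/
open MeasureTheory Finset

/-- The simplex `S = {y ∈ ℝ^m : y_j ≥ 0 for all j, ∑_j y_j = s}` in Euclidean space. -/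
def simplex (m : ℕ) (s : ℝ) : Set (EuclideanSpace ℝ (Fin m)) :=
  {y | (∀ j, 0 ≤ y j) ∧ ∑ j, y j = s}

/-- The uniform probability measure on the simplex: the `(m-1)`-dimensional Hausdorff
measure restricted to the simplex and normalized to total mass 1. -/
noncomputable def simplexUniform (m : ℕ) (s : ℝ) : Measure (EuclideanSpace ℝ (Fin m)) :=
  (μH[(m : ℝ) - 1] (simplex m s))⁻¹ • (μH[(m : ℝ) - 1]).restrict (simplex m s)

/-- The indicator `F_i` of the event `y_i ≤ T²`. -/
noncomputable def Find (m : ℕ) (T : ℝ) (i : Fin m) (y : EuclideanSpace ℝ (Fin m)) : ℝ :=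
  if y i ≤ T ^ 2 then 1 else 0

/-!
Translating by the vector equal to `u` on `K` and `0` elsewhere maps the simplex of mass
`s - |K| u` onto `{y ∈ S : y_k ≥ u for k ∈ K}`, and a dilation by `c` multiplies the
`(m-1)`-dimensional Hausdorff measure by `c^(m-1)`. Hence the uniform probability of
`{y_k ≥ u for all k ∈ K}` is `(1 - |K| u / s)^(m-1)`, and the same holds for the strict
events by letting `u ↓ t`. The covariance of two indicators equals the covariance of the
indicators of the complementary events, `P(y_i > t, y_j > t) - P(y_i > t) P(y_j > t)`, which for
`s = 2m²` is the claimed formula. The normalization makes sense because `S` lies in a translate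
of a linear image of a cube of `ℝ^(m-1)` and projects onto a cube of positive volume, so its
Hausdorff measure is finite and positive.
-/

open scoped ENNReal NNReal Pointwise Topology
open Filter ProbabilityTheory

lemma isClosed_simplex (m : ℕ) (s : ℝ) : IsClosed (simplex m s) := by
  simp only [simplex, Set.ofPred_and, Set.ofPred_forall]
  exact (isClosed_iInter fun j => isClosed_le continuous_const (by fun_prop)).inter
    (isClosed_eq (by fun_prop) continuous_const)

lemma smul_simplex (m : ℕ) {c : ℝ} (hc : 0 < c) (s : ℝ) :
    c • simplex m s = simplex m (c * s) := by
  ext y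
  rw [Set.mem_smul_set_iff_inv_smul_mem₀ hc.ne']
  simp only [simplex, Set.mem_ofPred_eq, PiLp.smul_apply, smul_eq_mul, ← Finset.mul_sum,
    mul_nonneg_iff_of_pos_left (inv_pos.2 hc), inv_mul_eq_iff_eq_mul₀ hc.ne']

lemma hausdorffMeasure_simplex_mul (m n : ℕ) {c : ℝ} (hc : 0 < c) (s : ℝ) :
    μH[n] (simplex m (c * s)) = ENNReal.ofReal (c ^ n) * μH[n] (simplex m s) := by
  rw [← smul_simplex m hc, Measure.hausdorffMeasure_smul₀ n.cast_nonneg hc.ne',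
    ENNReal.smul_def, smul_eq_mul, NNReal.rpow_natCast, ENNReal.coe_pow,
    Real.nnnorm_of_nonneg hc.le, ENNReal.ofReal_pow hc.le, ENNReal.ofReal_eq_coe_nnreal hc.le]

lemma simplex_inter_forall_le_eq_vadd (m : ℕ) (s : ℝ) (K : Finset (Fin m)) {u : ℝ}
    (hu : 0 ≤ u) :
    simplex m s ∩ {y | ∀ k ∈ K, u ≤ y k} =
      WithLp.toLp 2 (fun k => if k ∈ K then u else 0) +ᵥ simplex m (s - #K * u) := by
  ext y
  rw [Set.mem_vadd_set_iff_neg_vadd_mem]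
  simp only [simplex, Set.mem_inter_iff, Set.mem_ofPred_eq, vadd_eq_add, PiLp.add_apply,
    PiLp.neg_apply, Finset.sum_add_distrib, Finset.sum_neg_distrib, Finset.sum_ite_mem,
    Finset.univ_inter, Finset.sum_const, nsmul_eq_mul]
  constructor
  · rintro ⟨⟨hy0, hys⟩, hyK⟩
    refine ⟨fun k => ?_, by linarith⟩
    split_ifs with hk
    · linarith [hyK k hk]
    · linarith [hy0 k]
  · rintro ⟨hy0, hys⟩
    have hyK : ∀ k ∈ K, u ≤ y k := fun k hk => by simpa [hk] using hy0 k
    refine ⟨⟨fun k => ?_, by linarith⟩, hyK⟩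
    by_cases hk : k ∈ K
    · linarith [hyK k hk]
    · simpa [hk] using hy0 k

lemma hausdorffMeasure_simplex_forall_le (m n : ℕ) (K : Finset (Fin m)) {s u : ℝ} (hs : 0 < s)
    (hu : 0 ≤ u) (hKu : #K * u < s) :
    μH[n] (simplex m s ∩ {y | ∀ k ∈ K, u ≤ y k}) =
      ENNReal.ofReal (((s - #K * u) / s) ^ n) * μH[n] (simplex m s) := by
  rw [simplex_inter_forall_le_eq_vadd m s K hu, hausdorffMeasure_vadd _ (Or.inl n.cast_nonneg),
    ← hausdorffMeasure_simplex_mul m n (div_pos (sub_pos.2 hKu) hs), div_mul_cancel₀ _ hs.ne']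

lemma hausdorffMeasure_simplex_forall_lt (m : ℕ) {n : ℕ} (hn : n ≠ 0) (K : Finset (Fin m))
    {s t : ℝ} (hs : 0 < s) (ht : 0 ≤ t) (hKt : #K * t ≤ s) :
    μH[n] (simplex m s ∩ {y | ∀ k ∈ K, t < y k}) =
      ENNReal.ofReal (((s - #K * t) / s) ^ n) * μH[n] (simplex m s) := by
  rcases hKt.lt_or_eq with hKt | hKt
  · apply le_antisymm
    · calc _ ≤ μH[n] (simplex m s ∩ {y | ∀ k ∈ K, t ≤ y k}) :=
            measure_mono <| Set.inter_subset_inter_right _ fun y hy k hk => (hy k hk).le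
        _ = _ := hausdorffMeasure_simplex_forall_le m n K hs ht hKt
    · have hlim : Tendsto (fun u => ENNReal.ofReal (((s - #K * u) / s) ^ n) * μH[n] (simplex m s))
          (𝓝[>] t) (𝓝 (ENNReal.ofReal (((s - #K * t) / s) ^ n) * μH[n] (simplex m s))) := by
        refine ENNReal.Tendsto.mul_const (ENNReal.tendsto_ofReal ?_) (Or.inl ?_)
        · exact ((by fun_prop : Continuous fun u : ℝ => ((s - #K * u) / s) ^ n).tendsto
            t).mono_left nhdsWithin_le_nhds
        · exact (ENNReal.ofReal_pos.2 (by have := sub_pos.2 hKt; positivity)).ne'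
      have hKu : ∀ᶠ u in 𝓝[>] t, #K * u < s :=
        eventually_nhdsWithin_of_eventually_nhds
          ((by fun_prop : Continuous fun u : ℝ => (#K : ℝ) * u).continuousAt.eventually_lt
            continuousAt_const hKt)
      refine le_of_tendsto hlim ?_
      filter_upwards [hKu, self_mem_nhdsWithin] with u hKu htu
      rw [← hausdorffMeasure_simplex_forall_le m n K hs (ht.trans htu.le) hKu]
      exact measure_mono <| Set.inter_subset_inter_right _ fun y hy k hk => htu.trans_le (hy k hk)
  · -- the event would force `∑ k ∈ K, y k > #K * t = s`
    have hK : K.Nonempty := by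
      rw [Finset.nonempty_iff_ne_empty]
      rintro rfl
      simp [hs.ne] at hKt
    have hempty : simplex m s ∩ {y | ∀ k ∈ K, t < y k} = ∅ := by
      refine Set.eq_empty_of_forall_notMem fun y ⟨⟨hy0, hys⟩, hyK⟩ => ?_
      have hlt : ∑ _k ∈ K, t < ∑ k ∈ K, y k := Finset.sum_lt_sum_of_nonempty hK hyK
      have hle : ∑ k ∈ K, y k ≤ ∑ k, y k :=
        Finset.sum_le_sum_of_subset_of_nonneg K.subset_univ fun k _ _ => hy0 k
      rw [Finset.sum_const, nsmul_eq_mul] at hlt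
      linarith
    rw [hempty, hKt, sub_self, zero_div, zero_pow hn, ENNReal.ofReal_zero, zero_mul, measure_empty]

def hyperplaneLift (n : ℕ) : (Fin n → ℝ) →ₗ[ℝ] EuclideanSpace ℝ (Fin (n + 1)) :=
  (WithLp.linearEquiv 2 ℝ (Fin (n + 1) → ℝ)).symm.toLinearMap ∘ₗ
    LinearMap.pi (Fin.snoc (α := fun _ => (Fin n → ℝ) →ₗ[ℝ] ℝ) LinearMap.proj
      (-∑ i, LinearMap.proj i))

@[simp] lemma hyperplaneLift_castSucc (n : ℕ) (x : Fin n → ℝ) (i : Fin n) :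
    hyperplaneLift n x i.castSucc = x i := by
  simp [hyperplaneLift]

@[simp] lemma hyperplaneLift_last (n : ℕ) (x : Fin n → ℝ) :
    hyperplaneLift n x (Fin.last n) = -∑ i, x i := by
  simp [hyperplaneLift]

lemma hausdorffMeasure_fin_eq_volume (n : ℕ) : (μH[n] : Measure (Fin n → ℝ)) = volume := by
  simpa using hausdorffMeasure_pi_real (ι := Fin n)

lemma simplex_subset_vadd_image_hyperplaneLift (n : ℕ) (s : ℝ) :
    simplex (n + 1) s ⊆ EuclideanSpace.single (Fin.last n) s +ᵥ
      hyperplaneLift n '' Set.univ.pi fun _ => Set.Icc 0 s := by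
  rintro y ⟨hy0, hys⟩
  rw [Fin.sum_univ_castSucc] at hys
  refine ⟨hyperplaneLift n fun i => y i.castSucc, ⟨_, fun i _ => ⟨hy0 _, ?_⟩, rfl⟩, ?_⟩
  · have := Finset.single_le_sum (fun i _ => hy0 (Fin.castSucc i)) (Finset.mem_univ i)
    linarith [hy0 (Fin.last n)]
  · ext k
    induction k using Fin.lastCases with
    | last => simp; linarith
    | cast i => simp

lemma hausdorffMeasure_simplex_lt_top (n : ℕ) (s : ℝ) : μH[n] (simplex (n + 1) s) < ∞ := by
  calc μH[n] (simplex (n + 1) s)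
      ≤ μH[n] (hyperplaneLift n '' Set.univ.pi fun _ => Set.Icc 0 s) := by
        grw [simplex_subset_vadd_image_hyperplaneLift,
          hausdorffMeasure_vadd _ (Or.inl n.cast_nonneg)]
    _ ≤ ‖LinearMap.toContinuousLinearMap (hyperplaneLift n)‖₊ ^ (n : ℝ) *
          μH[n] (Set.univ.pi fun _ : Fin n => Set.Icc 0 s) :=
        (LinearMap.toContinuousLinearMap (hyperplaneLift n)).lipschitz.hausdorffMeasure_image_le
          n.cast_nonneg _
    _ < ∞ := by
        rw [hausdorffMeasure_fin_eq_volume]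
        exact ENNReal.mul_lt_top (by simp)
          (isCompact_univ_pi fun _ => isCompact_Icc).measure_lt_top

lemma pi_Icc_subset_image_simplex (n : ℕ) {s : ℝ} (hs : 0 ≤ s) :
    (Set.univ.pi fun _ : Fin n => Set.Icc 0 (s / (n + 1))) ⊆
      (fun (y : EuclideanSpace ℝ (Fin (n + 1))) i => y i.castSucc) '' simplex (n + 1) s := by
  intro x hx
  have hsum : ∑ i, x i ≤ s := calc
    ∑ i, x i ≤ ∑ _i : Fin n, s / (n + 1) := Finset.sum_le_sum fun i _ => (hx i trivial).2
    _ ≤ s := by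
      rw [Finset.sum_const, Finset.card_univ, Fintype.card_fin, nsmul_eq_mul, mul_div_assoc',
        div_le_iff₀ (by positivity)]
      nlinarith
  refine ⟨EuclideanSpace.single (Fin.last n) s + hyperplaneLift n x, ⟨fun k => ?_, ?_⟩, ?_⟩
  · induction k using Fin.lastCases with
    | last => simp; linarith
    | cast i => simpa using (hx i trivial).1
  · simp [Fin.sum_univ_castSucc]
  · ext i
    simp

lemma hausdorffMeasure_simplex_pos (n : ℕ) {s : ℝ} (hs : 0 < s) :
    0 < μH[n] (simplex (n + 1) s) := by
  let D : EuclideanSpace ℝ (Fin (n + 1)) →L[ℝ] Fin n → ℝ :=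
    ContinuousLinearMap.pi fun i => EuclideanSpace.proj i.castSucc
  have hcube : 0 < μH[n] (Set.univ.pi fun _ : Fin n => Set.Icc 0 (s / (n + 1))) := by
    rw [hausdorffMeasure_fin_eq_volume, volume_pi_pi]
    simp only [Real.volume_Icc, sub_zero, Finset.prod_const]
    exact ENNReal.pow_pos (ENNReal.ofReal_pos.2 (by positivity)) _
  refine pos_of_ne_zero fun h => hcube.ne' (le_antisymm ?_ bot_le)
  calc _ ≤ μH[n] (D '' simplex (n + 1) s) := measure_mono (pi_Icc_subset_image_simplex n hs.le)
    _ ≤ ‖D‖₊ ^ (n : ℝ) * μH[n] (simplex (n + 1) s) :=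
        D.lipschitz.hausdorffMeasure_image_le n.cast_nonneg _
    _ = 0 := by rw [h, mul_zero]

lemma simplexUniform_eq_cond (m : ℕ) (s : ℝ) :
    simplexUniform m s = μH[(m : ℝ) - 1][|simplex m s] := rfl

lemma isProbabilityMeasure_simplexUniform (n : ℕ) {s : ℝ} (hs : 0 < s) :
    IsProbabilityMeasure (simplexUniform (n + 1) s) := by
  rw [simplexUniform_eq_cond, Nat.cast_add_one, add_sub_cancel_right]
  exact cond_isProbabilityMeasure_of_finite (hausdorffMeasure_simplex_pos n hs).ne'
    (hausdorffMeasure_simplex_lt_top n s).ne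

lemma simplexUniform_real_forall_lt {n : ℕ} (hn : n ≠ 0) (K : Finset (Fin (n + 1))) {s t : ℝ}
    (hs : 0 < s) (ht : 0 ≤ t) (hKt : #K * t ≤ s) :
    (simplexUniform (n + 1) s).real {y | ∀ k ∈ K, t < y k} = ((s - #K * t) / s) ^ n := by
  have hKt' : 0 ≤ s - #K * t := sub_nonneg.2 hKt
  rw [measureReal_def, simplexUniform_eq_cond, Nat.cast_add_one, add_sub_cancel_right,
    cond_apply (isClosed_simplex _ s).measurableSet,
    hausdorffMeasure_simplex_forall_lt _ hn K hs ht hKt, mul_comm,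
    ENNReal.mul_inv_cancel_right (hausdorffMeasure_simplex_pos n hs).ne'
      (hausdorffMeasure_simplex_lt_top n s).ne, ENNReal.toReal_ofReal (by positivity)]

lemma Find_eq_indicator (m : ℕ) (T : ℝ) (i : Fin m) :
    Find m T i = {y | T ^ 2 < y i}ᶜ.indicator 1 := by
  ext y
  simp [Find, Set.indicator_apply]

lemma measureReal_compl_inter_compl_sub_mul {Ω : Type*} [MeasurableSpace Ω] (μ : Measure Ω)
    [IsProbabilityMeasure μ] {A B : Set Ω} (hA : MeasurableSet A) (hB : MeasurableSet B) :
    μ.real (Aᶜ ∩ Bᶜ) - μ.real Aᶜ * μ.real Bᶜ =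
      μ.real (A ∩ B) - μ.real A * μ.real B := by
  rw [← Set.compl_union, probReal_compl_eq_one_sub (hA.union hB), probReal_compl_eq_one_sub hA,
    probReal_compl_eq_one_sub hB]
  linarith [measureReal_union_add_inter (s := A) (μ := μ) hB]

lemma integral_Find_mul_Find_sub (m : ℕ) (T : ℝ) (i j : Fin m)
    (μ : Measure (EuclideanSpace ℝ (Fin m))) [IsProbabilityMeasure μ] :
    (∫ y, Find m T i y * Find m T j y ∂μ) -
        (∫ y, Find m T i y ∂μ) * (∫ y, Find m T j y ∂μ) =
      μ.real ({y | T ^ 2 < y i} ∩ {y | T ^ 2 < y j}) -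
        μ.real {y | T ^ 2 < y i} * μ.real {y | T ^ 2 < y j} := by
  have hE (k : Fin m) : MeasurableSet {y : EuclideanSpace ℝ (Fin m) | T ^ 2 < y k} :=
    measurableSet_lt measurable_const (by fun_prop)
  have hprod : (fun y => Find m T i y * Find m T j y) =
      ({y | T ^ 2 < y i}ᶜ ∩ {y | T ^ 2 < y j}ᶜ).indicator 1 := by
    rw [Set.inter_indicator_one, Find_eq_indicator, Find_eq_indicator]
    rfl
  rw [hprod, Find_eq_indicator, Find_eq_indicator,
    integral_indicator_one ((hE i).compl.inter (hE j).compl),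
    integral_indicator_one (hE i).compl, integral_indicator_one (hE j).compl,
    measureReal_compl_inter_compl_sub_mul _ (hE i) (hE j)]

theorem covariance_indicators_simplex_general (m : ℕ) (hm : 2 ≤ m) (T : ℝ)
    (hT : T ^ 2 ≤ (m : ℝ) ^ 2) (i j : Fin m) (hij : i ≠ j) :
    (∫ y, Find m T i y * Find m T j y ∂(simplexUniform m (2 * (m : ℝ) ^ 2))) -
        (∫ y, Find m T i y ∂(simplexUniform m (2 * (m : ℝ) ^ 2))) *
          (∫ y, Find m T j y ∂(simplexUniform m (2 * (m : ℝ) ^ 2))) =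
      (1 - T ^ 2 / (m : ℝ) ^ 2) ^ (m - 1) -
        (1 - T ^ 2 / (2 * (m : ℝ) ^ 2)) ^ (2 * m - 2) := by
  obtain ⟨n, rfl⟩ : ∃ n, m = n + 1 := ⟨m - 1, by omega⟩
  have hn : n ≠ 0 := by omega
  push_cast at hT ⊢
  have hs : 0 < 2 * ((n : ℝ) + 1) ^ 2 := by positivity
  have := isProbabilityMeasure_simplexUniform n hs
  have hP₁ (k) := simplexUniform_real_forall_lt hn {k} hs (sq_nonneg T) (by simp; nlinarith)
  have hP₂ := simplexUniform_real_forall_lt hn {i, j} hs (sq_nonneg T)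
    (by rw [Finset.card_pair hij]; push_cast; linarith)
  simp only [Finset.mem_singleton, forall_eq, Finset.card_singleton, Nat.cast_one,
    one_mul] at hP₁
  simp only [Finset.forall_mem_insert, Finset.mem_singleton, forall_eq, Finset.card_pair hij,
    Set.ofPred_and, Nat.cast_ofNat] at hP₂
  rw [integral_Find_mul_Find_sub, hP₁, hP₁, hP₂,
    ← pow_add, show 2 * (n + 1) - 2 = n + n by omega]
  congr 2 <;> field_simp

/-- On the simplex `{y : y_j ≥ 0, ∑ y_j = 2m²}` with the uniform probability measure,
the covariance `E[F_i·F_j] − E[F_i]·E[F_j]` of the indicators of `{y_i ≤ T²}` and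
`{y_j ≤ T²}` (`i ≠ j`) equals `(1 − T²/m²)^{m-1} − (1 − T²/(2m²))^{2m-2}`. -/
theorem covariance_indicators_simplex (m : ℕ) (hm : 2 ≤ m) (T : ℝ)
    (hT0 : 0 ≤ T ^ 2) (hT : T ^ 2 ≤ (m : ℝ) ^ 2) (i j : Fin m) (hij : i ≠ j) :
    (∫ y, Find m T i y * Find m T j y ∂(simplexUniform m (2 * (m : ℝ) ^ 2))) -
        (∫ y, Find m T i y ∂(simplexUniform m (2 * (m : ℝ) ^ 2))) *
          (∫ y, Find m T j y ∂(simplexUniform m (2 * (m : ℝ) ^ 2))) =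
      (1 - T ^ 2 / (m : ℝ) ^ 2) ^ (m - 1) -
        (1 - T ^ 2 / (2 * (m : ℝ) ^ 2)) ^ (2 * m - 2) :=
  covariance_indicators_simplex_general m hm T hT i j hij
end
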